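/- The theorem (t3) of FSK^d is semantically valid: for all formulas φ, ψ of the modal language {∧,∨,~,→,□}, the formula (~□φ ∧ □ψ) → ~□(φ ∨ ~ψ) is verified at every world of every Nelsonian modal model. -/

import Mathlib

inductive MForm : Type where
  | var : Nat → MForm
  | and : MForm → MForm → MForm
  | or  : MForm → MForm → MForm
  | neg : MForm → MForm
  | imp : MForm → MForm → MForm
  | box : MForm → MForm

/-- A Nelsonian modal model. -/
structure MNModel where
  W : Type
  le : W → W → Prop
  refl : ∀ w, le w w
  trans : ∀ {a b c}, le a b → le b c → le a c
  Vp : Nat → W → Prop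
  Vn : Nat → W → Prop
  monoP : ∀ (n : Nat) {w v}, le w v → Vp n w → Vp n v
  monoN : ∀ (n : Nat) {w v}, le w v → Vn n w → Vn n v
  R : W → W → Prop
  c1 : ∀ {w w' v}, le w w' → R w v → ∃ v', R w' v' ∧ le v v'
  c2 : ∀ {w v v'}, R w v → le v v' → ∃ w', le w w' ∧ R w' v'

/-- Verification (`true`) and falsification (`false`) in a Nelsonian modal model. -/
def MNModel.sat (M : MNModel) : MForm → Bool → M.W → Prop
  | .var n, true, w => M.Vp n w
  | .var n, false, w => M.Vn n w
  | .and φ ψ, true, w => M.sat φ true w ∧ M.sat ψ true w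
  | .and φ ψ, false, w => M.sat φ false w ∨ M.sat ψ false w
  | .or φ ψ, true, w => M.sat φ true w ∨ M.sat ψ true w
  | .or φ ψ, false, w => M.sat φ false w ∧ M.sat ψ false w
  | .neg φ, b, w => M.sat φ (!b) w
  | .imp φ ψ, true, w => ∀ v, M.le w v → M.sat φ true v → M.sat ψ true v
  | .imp φ ψ, false, w => M.sat φ true w ∧ M.sat ψ false w
  | .box φ, true, w => ∀ v u, M.le w v → M.R v u → M.sat φ true u
  | .box φ, false, w => ∃ u, M.R w u ∧ M.sat φ false u

theorem t3_valid (φ ψ : MForm) (M : MNModel) (w : M.W) :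
    M.sat (.imp (.and (.neg (.box φ)) (.box ψ))
                (.neg (.box (.or φ (.neg ψ))))) true w := by
  rintro v - ⟨⟨u, hvu, hφ⟩, hψ⟩
  -- the successor `u` falsifying `φ` verifies `ψ` since `□ψ` holds at `v ≤ v`, so it falsifies `φ ∨ ~ψ`
  exact ⟨u, hvu, hφ, hψ v u (M.refl v) hvu⟩
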